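/- Let N ≥ 2 and let B = (b_{ij}) be an N×N skew-symmetric integer matrix. Set m_{k−1} := b_{k1} for k = 2, 3, …, N, and ε_{ij} := (m_i|m_j| − m_j|m_i|)/2 for 1 ≤ i, j ≤ N−1. Then μ₁(B) = ρ B ρ⁻¹ if and only if the following three conditions hold: (i) m_r = m_{N−r} for r = 1, 2, …, N−1; (ii) b_{ij} = m_{i−j} + ε_{1,i−j+1} + ε_{2,i−j+2} + ⋯ + ε_{j−1,i−1} for all N ≥ i > j ≥ 1; (iii) B is symmetric along the non-leading diagonal, i.e. b_{N−j+1,N−i+1} = b_{ij} for all i, j. -/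

import Mathlib

/-!
Conjugation by `ρ` relabels the nodes by `i ↦ i + 1 mod N`, so `μ₁(B) = ρ B ρ⁻¹` splits into
the recurrence `b_{i,j} = b_{i+1,j+1} + ε_{ij}` for `i, j < N` and the last-row condition
`b_{N,j} = m_j` for `j < N`. Started from the first column, the recurrence is equivalent to
the closed form (ii). Given (ii), the last-row condition reads
`m_r = m_{N-r} + Σ_{s<r} ε(m_s, m_{N-r+s})`; once `m` is a palindrome the sum cancels in pairs
`s ↔ r - s`, so by induction on `r` the last-row condition is equivalent to (i). The same
cancellation, applied to two diagonal sums of different lengths, gives (iii).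
-/

open Matrix

/-- The cyclic permutation matrix ρ: ρ_{i+1,i} = 1 (1-based), ρ_{1,N} = 1. -/
def rhoM (N : ℕ) : Matrix (Fin N) (Fin N) ℤ :=
  Matrix.of fun i j => if (i : ℕ) = ((j : ℕ) + 1) % N then 1 else 0

/-- The skew-rotation τ: equal to ρ except τ_{1,N} = −1. -/
def tauM (N : ℕ) : Matrix (Fin N) (Fin N) ℤ :=
  Matrix.of fun i j =>
    if (i : ℕ) = ((j : ℕ) + 1) % N then (if (j : ℕ) + 1 = N then -1 else 1) else 0

/-- Fomin–Zelevinsky matrix mutation at node `k`. -/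
def mutB {N : ℕ} (k : Fin N) (B : Matrix (Fin N) (Fin N) ℤ) : Matrix (Fin N) (Fin N) ℤ :=
  Matrix.of fun i j =>
    if i = k ∨ j = k then -B i j
    else B i j + (|B i k| * B k j + B i k * |B k j|) / 2

/-- Node `k` is a sink of `B` if all entries of column `k` are nonnegative. -/
def IsSink {N : ℕ} (k : Fin N) (B : Matrix (Fin N) (Fin N) ℤ) : Prop :=
  ∀ i, 0 ≤ B i k

open Finset

def epsilon (x y : ℤ) : ℤ := (x * |y| - y * |x|) / 2

theorem two_dvd_mul_abs_sub_mul_abs (x y : ℤ) : 2 ∣ x * |y| - y * |x| := by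
  rcases abs_choice x with hx | hx <;> rcases abs_choice y with hy | hy <;> rw [hx, hy]
  · exact ⟨0, by ring⟩
  · exact ⟨-(x * y), by ring⟩
  · exact ⟨x * y, by ring⟩
  · exact ⟨0, by ring⟩

theorem epsilon_swap (x y : ℤ) : epsilon y x = -epsilon x y := by
  obtain ⟨c, hc⟩ := two_dvd_mul_abs_sub_mul_abs x y
  unfold epsilon
  omega

@[simp]
theorem epsilon_self (x : ℤ) : epsilon x x = 0 := by
  simp [epsilon]

theorem sum_Icc_eq_zero_of_reflect (g : ℕ → ℤ) (p q : ℕ)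
    (hg : ∀ s ∈ Icc p q, g (p + q - s) = -g s) : ∑ s ∈ Icc p q, g s = 0 := by
  refine sum_involution (fun s _ => p + q - s) (fun s hs => by rw [hg s hs]; ring)
    (fun s hs hne hfix => hne ?_) (fun s hs => ?_) (fun s hs => ?_)
  · have := hg s hs
    rw [hfix] at this
    omega
  all_goals simp only [mem_Icc] at hs ⊢; omega

theorem sum_Icc_epsilon_eq_zero (m : ℕ → ℤ) (d p q : ℕ)
    (hm : ∀ s ∈ Icc p q, m (d + s) = m (p + q - s)) :
    ∑ s ∈ Icc p q, epsilon (m s) (m (d + s)) = 0 := by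
  refine sum_Icc_eq_zero_of_reflect _ p q fun s hs => ?_
  have hs' : p + q - s ∈ Icc p q := by simp only [mem_Icc] at hs ⊢; omega
  have hrefl := hm (p + q - s) hs'
  rw [Nat.sub_sub_self (by simp only [mem_Icc] at hs; omega)] at hrefl
  rw [hrefl, ← hm s hs, epsilon_swap]

section Mutation

variable {N : ℕ} {B : Matrix (Fin N) (Fin N) ℤ}

theorem apply_swap_of_transpose_eq_neg (hB : Bᵀ = -B) (i j : Fin N) : B j i = -B i j :=
  congrFun (congrFun hB i) j

theorem apply_self_of_transpose_eq_neg (hB : Bᵀ = -B) (i : Fin N) : B i i = 0 := by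
  have := apply_swap_of_transpose_eq_neg hB i i
  omega

theorem mutB_apply_left (k j : Fin N) : mutB k B k j = -B k j := by
  simp [mutB]

theorem mutB_apply_right (k i : Fin N) : mutB k B i k = -B i k := by
  simp [mutB]

theorem mutB_apply_of_ne_of_ne (hB : Bᵀ = -B) {k i j : Fin N} (hi : i ≠ k) (hj : j ≠ k) :
    mutB k B i j = B i j + epsilon (B i k) (B j k) := by
  simp only [mutB, Matrix.of_apply, hi, hj, or_self, if_false, epsilon,
    apply_swap_of_transpose_eq_neg hB j k, abs_neg]
  ring_nf

end Mutation

theorem rhoM_eq_toMatrix (N : ℕ) : rhoM N = (finRotate N).symm.toPEquiv.toMatrix := by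
  rcases N with _ | n
  · exact Matrix.ext fun i => i.elim0
  ext i j
  have hrot : (i : ℕ) = ((j : ℕ) + 1) % (n + 1) ↔ (finRotate (n + 1)).symm i = j := by
    rw [Equiv.symm_apply_eq, Fin.ext_iff, coe_finRotate]
    split_ifs with hj
    · simp [hj]
    · have := Fin.val_lt_last hj
      rw [Nat.mod_eq_of_lt (by omega)]
  simp [rhoM, PEquiv.toMatrix_apply, hrot]

theorem rhoM_mul_mul_inv (N : ℕ) (B : Matrix (Fin N) (Fin N) ℤ) :
    rhoM N * B * (rhoM N)⁻¹ = B.submatrix (finRotate N).symm (finRotate N).symm := by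
  have hinv : (rhoM N)⁻¹ = (finRotate N).toPEquiv.toMatrix := by
    refine Matrix.inv_eq_right_inv ?_
    rw [rhoM_eq_toMatrix, ← PEquiv.toMatrix_trans, ← Equiv.toPEquiv_trans,
      Equiv.symm_trans_self, Equiv.toPEquiv_refl, PEquiv.toMatrix_refl]
  rw [hinv, rhoM_eq_toMatrix, PEquiv.toMatrix_toPEquiv_mul, PEquiv.mul_toMatrix_toPEquiv]
  rfl

theorem Matrix.eq_submatrix_symm_iff {α R : Type*} (e : α ≃ α) (M B : Matrix α α R) :
    M = B.submatrix e.symm e.symm ↔ ∀ a b, M (e a) (e b) = B a b := by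
  refine ⟨fun h a b => by simp [h], fun h => Matrix.ext fun i j => ?_⟩
  simpa using h (e.symm i) (e.symm j)

theorem finRotate_mk_of_add_one_lt {N a : ℕ} (ha : a + 1 < N) :
    finRotate N ⟨a, by omega⟩ = ⟨a + 1, ha⟩ := by
  obtain ⟨n, rfl⟩ : ∃ n, N = n + 1 := ⟨N - 1, by omega⟩
  exact finRotate_of_lt (by omega)

theorem finRotate_mk_sub_one {N : ℕ} (hN : 0 < N) :
    finRotate N ⟨N - 1, by omega⟩ = ⟨0, hN⟩ := by
  obtain ⟨n, rfl⟩ : ∃ n, N = n + 1 := ⟨N - 1, by omega⟩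
  exact finRotate_last'

section PeriodOne

variable {N : ℕ}

-- Matrix indices start at `0`, one less than in the paper, while `m` keeps the paper's indexing.
def Recurrence (B : Matrix (Fin N) (Fin N) ℤ) (m : ℕ → ℤ) : Prop :=
  ∀ a b (ha : a + 1 < N) (hb : b + 1 < N),
    B ⟨a, by omega⟩ ⟨b, by omega⟩ = B ⟨a + 1, ha⟩ ⟨b + 1, hb⟩ + epsilon (m (a + 1)) (m (b + 1))

def LastRow (B : Matrix (Fin N) (Fin N) ℤ) (m : ℕ → ℤ) : Prop :=
  ∀ b (hb : b + 1 < N), B ⟨N - 1, by omega⟩ ⟨b, by omega⟩ = m (b + 1)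

def ClosedForm (B : Matrix (Fin N) (Fin N) ℤ) (m : ℕ → ℤ) : Prop :=
  ∀ i j : Fin N, (j : ℕ) < i →
    B i j = m (i - j) + ∑ s ∈ Icc 1 (j : ℕ), epsilon (m s) (m (i - j + s))

def IsPalindrome (N : ℕ) (m : ℕ → ℤ) : Prop :=
  ∀ r, 1 ≤ r → r ≤ N - 1 → m r = m (N - r)

variable {B : Matrix (Fin N) (Fin N) ℤ} {m : ℕ → ℤ}

theorem mutB_zero_eq_rhoM_conj_iff (hN : 0 < N) (hskew : Bᵀ = -B)
    (hcol : ∀ k (hk : k < N), 1 ≤ k → B ⟨k, hk⟩ ⟨0, hN⟩ = m k) :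
    mutB ⟨0, hN⟩ B = rhoM N * B * (rhoM N)⁻¹ ↔ Recurrence B m ∧ LastRow B m := by
  have hrow (k) (hk : k < N) (h1 : 1 ≤ k) : B ⟨0, hN⟩ ⟨k, hk⟩ = -m k := by
    rw [apply_swap_of_transpose_eq_neg hskew, hcol k hk h1]
  have hne (k) (hk : k + 1 < N) : (⟨k + 1, hk⟩ : Fin N) ≠ ⟨0, hN⟩ := by simp
  have hinner (a b) (ha : a + 1 < N) (hb : b + 1 < N) :
      mutB ⟨0, hN⟩ B ⟨a + 1, ha⟩ ⟨b + 1, hb⟩ =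
        B ⟨a + 1, ha⟩ ⟨b + 1, hb⟩ + epsilon (m (a + 1)) (m (b + 1)) := by
    rw [mutB_apply_of_ne_of_ne hskew (hne a ha) (hne b hb), hcol _ ha (by omega),
      hcol _ hb (by omega)]
  rw [rhoM_mul_mul_inv, Matrix.eq_submatrix_symm_iff]
  constructor
  · intro h
    refine ⟨fun a b ha hb => ?_, fun b hb => ?_⟩
    · have := h ⟨a, by omega⟩ ⟨b, by omega⟩
      rwa [finRotate_mk_of_add_one_lt ha, finRotate_mk_of_add_one_lt hb, hinner, eq_comm] at this
    · have := h ⟨N - 1, by omega⟩ ⟨b, by omega⟩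
      rwa [finRotate_mk_sub_one hN, finRotate_mk_of_add_one_lt hb, mutB_apply_left,
        hrow _ _ (by omega), neg_neg, eq_comm] at this
  · rintro ⟨hrec, hlast⟩ ⟨a, ha⟩ ⟨b, hb⟩
    obtain ha' | rfl : a + 1 < N ∨ a = N - 1 := by omega
    · rw [finRotate_mk_of_add_one_lt ha']
      obtain hb' | rfl : b + 1 < N ∨ b = N - 1 := by omega
      · rw [finRotate_mk_of_add_one_lt hb', hinner, hrec a b ha' hb']
      · rw [finRotate_mk_sub_one hN, mutB_apply_right, hcol _ _ (by omega),
          apply_swap_of_transpose_eq_neg hskew, hlast a ha']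
    · rw [finRotate_mk_sub_one hN]
      obtain hb' | rfl : b + 1 < N ∨ b = N - 1 := by omega
      · rw [finRotate_mk_of_add_one_lt hb', mutB_apply_left, hrow _ _ (by omega), neg_neg,
          hlast b hb']
      · rw [finRotate_mk_sub_one hN, mutB_apply_left, apply_self_of_transpose_eq_neg hskew,
          apply_self_of_transpose_eq_neg hskew, neg_zero]

theorem closedForm_of_recurrence (hN : 0 < N)
    (hcol : ∀ k (hk : k < N), 1 ≤ k → B ⟨k, hk⟩ ⟨0, hN⟩ = m k) (hrec : Recurrence B m) :
    ClosedForm B m := by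
  rintro ⟨i, hi⟩ ⟨j, hj⟩ (hji : j < i)
  induction j generalizing i with
  | zero => simp [hcol i hi (by omega)]
  | succ j ih =>
    obtain ⟨i, rfl⟩ : ∃ i', i = i' + 1 := ⟨i - 1, by omega⟩
    have hstep := hrec i j hi hj
    rw [ih i (by omega) (by omega) (by omega)] at hstep
    simp only [Nat.add_sub_add_right] at hstep ⊢
    rw [sum_Icc_succ_top (by omega), show i - j + (j + 1) = i + 1 by omega,
      epsilon_swap]
    linarith

theorem recurrence_of_closedForm (hskew : Bᵀ = -B) (hclosed : ClosedForm B m) :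
    Recurrence B m := by
  have below (a b) (ha : a + 1 < N) (hba : b < a) :
      B ⟨a, by omega⟩ ⟨b, by omega⟩ =
        B ⟨a + 1, ha⟩ ⟨b + 1, by omega⟩ + epsilon (m (a + 1)) (m (b + 1)) := by
    rw [hclosed ⟨a, _⟩ ⟨b, _⟩ hba, hclosed ⟨a + 1, _⟩ ⟨b + 1, _⟩ (by simpa using hba)]
    simp only [Nat.add_sub_add_right]
    rw [sum_Icc_succ_top (by omega), show a - b + (b + 1) = a + 1 by omega, epsilon_swap]
    ring
  intro a b ha hb
  rcases lt_trichotomy b a with hba | rfl | hab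
  · exact below a b ha hba
  · simp [apply_self_of_transpose_eq_neg hskew]
  · have := below b a hb hab
    have := apply_swap_of_transpose_eq_neg hskew ⟨b, by omega⟩ ⟨a, by omega⟩
    have := apply_swap_of_transpose_eq_neg hskew ⟨b + 1, hb⟩ ⟨a + 1, ha⟩
    have := epsilon_swap (m (a + 1)) (m (b + 1))
    linarith

theorem IsPalindrome.sum_Icc_epsilon_eq_zero (hpal : IsPalindrome N m) {d p q : ℕ}
    (hp : 1 ≤ p) (hd : 1 ≤ d) (hN : p + q + d = N) :
    ∑ s ∈ Icc p q, epsilon (m s) (m (d + s)) = 0 :=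
  _root_.sum_Icc_epsilon_eq_zero m d p q fun s hs => by
    simp only [mem_Icc] at hs
    rw [hpal (d + s) (by omega) (by omega)]
    congr 1
    omega

theorem IsPalindrome.sum_Icc_one_epsilon_eq (hpal : IsPalindrome N m) {d u v : ℕ}
    (hd : 1 ≤ d) (hN : u + v + d + 1 = N) :
    ∑ s ∈ Icc 1 u, epsilon (m s) (m (d + s)) = ∑ s ∈ Icc 1 v, epsilon (m s) (m (d + s)) := by
  wlog huv : u ≤ v generalizing u v
  · exact (this (u := v) (v := u) (by omega) (by omega)).symm
  have hsplit := sum_Ico_consecutive (fun s => epsilon (m s) (m (d + s)))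
    (show 1 ≤ u + 1 by omega) (show u + 1 ≤ v + 1 by omega)
  simp only [Ico_add_one_right_eq_Icc] at hsplit
  rw [← hsplit, hpal.sum_Icc_epsilon_eq_zero (p := u + 1) (by omega) hd (by omega), add_zero]

theorem isPalindrome_of_lastRow (hclosed : ClosedForm B m) (hlast : LastRow B m) :
    IsPalindrome N m := by
  intro r
  induction r using Nat.strong_induction_on with
  | _ r ih =>
  intro hr1 hrN
  have hsum : ∑ s ∈ Icc 1 (r - 1), epsilon (m s) (m (N - r + s)) = 0 :=
    sum_Icc_epsilon_eq_zero m (N - r) 1 (r - 1) fun s hs => by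
      simp only [mem_Icc] at hs
      rw [show 1 + (r - 1) - s = r - s by omega, ih (r - s) (by omega) (by omega) (by omega),
        show N - (r - s) = N - r + s by omega]
  have h := hclosed ⟨N - 1, by omega⟩ ⟨r - 1, by omega⟩ (by simp only; omega)
  rw [hlast (r - 1) (by omega)] at h
  simpa only [show r - 1 + 1 = r by omega, show N - 1 - (r - 1) = N - r by omega, hsum,
    add_zero] using h

theorem lastRow_of_isPalindrome (hclosed : ClosedForm B m) (hpal : IsPalindrome N m) :
    LastRow B m := by
  intro b hb
  rw [hclosed ⟨N - 1, by omega⟩ ⟨b, by omega⟩ (by simp only; omega)]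
  simp only
  rw [hpal.sum_Icc_epsilon_eq_zero le_rfl (by omega) (by omega), add_zero,
    hpal (N - 1 - b) (by omega) (by omega)]
  congr 1
  omega

theorem antidiagonal_symm (hskew : Bᵀ = -B) (hclosed : ClosedForm B m)
    (hpal : IsPalindrome N m) (i j : Fin N) : B j.rev i.rev = B i j := by
  have below (i j : Fin N) (hji : (j : ℕ) < i) : B j.rev i.rev = B i j := by
    rw [hclosed j.rev i.rev (by simp only [Fin.val_rev]; omega), hclosed i j hji]
    simp only [Fin.val_rev, show N - (j + 1) - (N - (i + 1)) = i - j by omega]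
    rw [hpal.sum_Icc_one_epsilon_eq (u := N - (i + 1)) (v := j) (by omega) (by omega)]
  rcases lt_trichotomy (j : ℕ) i with hji | hij | hij
  · exact below i j hji
  · obtain rfl := Fin.ext hij
    simp [apply_self_of_transpose_eq_neg hskew]
  · rw [apply_swap_of_transpose_eq_neg hskew, below j i hij, ← apply_swap_of_transpose_eq_neg hskew]

end PeriodOne

/-- The general period 1 solution: with `m_{k−1} = b_{k1}` and
`ε_{ij} = (m_i|m_j| − m_j|m_i|)/2`, the matrix `B` satisfies `μ₁ B = ρ B ρ⁻¹` iff
(i) `m_r = m_{N−r}`, (ii) `b_{ij} = m_{i−j} + Σ_{s=1}^{j−1} ε_{s,i−j+s}` for `i > j`,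
and (iii) `B` is symmetric along the non-leading diagonal. -/
theorem stmt10 (N : ℕ) (hN : 2 ≤ N) (B : Matrix (Fin N) (Fin N) ℤ)
    (hskew : Bᵀ = -B)
    (m : ℕ → ℤ) (hm : ∀ j (h1 : 1 ≤ j) (h2 : j ≤ N - 1), m j = B ⟨j, by omega⟩ ⟨0, by omega⟩)
    (eps : ℕ → ℕ → ℤ)
    (heps : ∀ i j, eps i j = (m i * |m j| - m j * |m i|) / 2) :
    mutB ⟨0, by omega⟩ B = rhoM N * B * (rhoM N)⁻¹ ↔
      ((∀ r, 1 ≤ r → r ≤ N - 1 → m r = m (N - r)) ∧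
       (∀ i j : Fin N, (j : ℕ) < (i : ℕ) →
          B i j = m ((i : ℕ) - (j : ℕ)) +
            ∑ s ∈ Finset.Icc 1 (j : ℕ), eps s ((i : ℕ) - (j : ℕ) + s)) ∧
       (∀ i j : Fin N,
          B ⟨N - 1 - (j : ℕ), by omega⟩ ⟨N - 1 - (i : ℕ), by omega⟩ = B i j)) := by
  obtain rfl : eps = fun i j => epsilon (m i) (m j) := funext₂ heps
  have hcol (k) (hk : k < N) (h1 : 1 ≤ k) : B ⟨k, hk⟩ ⟨0, by omega⟩ = m k :=
    (hm k h1 (by omega)).symm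
  rw [mutB_zero_eq_rhoM_conj_iff (by omega) hskew hcol]
  constructor
  · rintro ⟨hrec, hlast⟩
    have hclosed := closedForm_of_recurrence (by omega) hcol hrec
    have hpal := isPalindrome_of_lastRow hclosed hlast
    refine ⟨hpal, hclosed, fun i j => ?_⟩
    convert antidiagonal_symm hskew hclosed hpal i j using 2 <;> ext <;> simp <;> omega
  · rintro ⟨hpal, hclosed, -⟩
    exact ⟨recurrence_of_closedForm hskew hclosed, lastRow_of_isPalindrome hclosed hpal⟩
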